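/- Global scaling law for the partitioned-manifold model: let d ≥ 1 be a natural number, let L ≥ 0, let f : ℝ^d → ℝ be L-Lipschitz with respect to the Euclidean norm, and let C be a positive integer. Define r : ℝ^d → ℝ^d by r(x)_i = (⌊C·x_i⌋ + 1/2)/C. Then the average approximation error over the unit cube satisfies ∫_{[0,1]^d} |f(x) − f(r(x))| dx ≤ (L·√d/2)·(C^d)^{−1/d}; that is, the expected error under the uniform distribution on [0,1]^d scales as n^{−1/d} with n = C^d. -/

import Mathlib

/-!
Each coordinate of `x` lies in a cell of side `1/C` whose center is `r(x)_i`, so it is within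
`1/(2C)` of it and `‖x - r(x)‖ ≤ √d/(2C)`. The Lipschitz bound turns this into the pointwise error
bound `L√d/(2C)`, which integrates over the unit cube (of volume one) to the same bound, and
`(C^d)^(-1/d) = 1/C`.
-/

/-- The grid-rounding map sending a point to the center of its grid cell:
`r(x)_i = (⌊C·x_i⌋ + 1/2)/C`. -/
noncomputable def gridRound (d C : ℕ) (x : EuclideanSpace ℝ (Fin d)) :
    EuclideanSpace ℝ (Fin d) :=
  WithLp.toLp 2 (fun i => ((⌊(C : ℝ) * x i⌋ : ℝ) + 1 / 2) / C)

open MeasureTheory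

lemma abs_sub_floor_add_half_le (y : ℝ) : |y - (⌊y⌋ + 1 / 2)| ≤ 1 / 2 := by
  have := Int.floor_le y
  have := Int.lt_floor_add_one y
  rw [abs_le]
  constructor <;> linarith

lemma abs_sub_floor_mul_add_half_div_le {c : ℝ} (hc : 0 < c) (t : ℝ) :
    |t - (⌊c * t⌋ + 1 / 2) / c| ≤ 1 / (2 * c) := by
  have hsub : t - (⌊c * t⌋ + 1 / 2) / c = (c * t - (⌊c * t⌋ + 1 / 2)) / c := by
    field_simp
  rw [hsub, abs_div, abs_of_pos hc, div_le_div_iff₀ hc (by positivity)]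
  nlinarith [abs_sub_floor_add_half_le (c * t)]

lemma EuclideanSpace.dist_le_sqrt_card_mul {ι : Type*} [Fintype ι] {x y : EuclideanSpace ℝ ι}
    {δ : ℝ} (hδ : 0 ≤ δ) (h : ∀ i, dist (x i) (y i) ≤ δ) :
    dist x y ≤ √(Fintype.card ι) * δ := by
  have hsum : ∑ i, dist (x i) (y i) ^ 2 ≤ Fintype.card ι * δ ^ 2 := by
    calc ∑ i, dist (x i) (y i) ^ 2 ≤ ∑ _i : ι, δ ^ 2 :=
          Finset.sum_le_sum fun i _ => pow_le_pow_left₀ dist_nonneg (h i) 2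
      _ = Fintype.card ι * δ ^ 2 := by rw [Finset.sum_const, Finset.card_univ, nsmul_eq_mul]
  calc dist x y = √(∑ i, dist (x i) (y i) ^ 2) := EuclideanSpace.dist_eq x y
    _ ≤ √(Fintype.card ι * δ ^ 2) := Real.sqrt_le_sqrt hsum
    _ = √(Fintype.card ι) * δ := by rw [Real.sqrt_mul (by positivity), Real.sqrt_sq hδ]

lemma dist_gridRound_le {d C : ℕ} (hC : 0 < C) (x : EuclideanSpace ℝ (Fin d)) :
    dist x (gridRound d C x) ≤ √d / (2 * C) := by
  have hCpos : (0 : ℝ) < C := Nat.cast_pos.mpr hC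
  have hcoord : ∀ i, dist (x i) (gridRound d C x i) ≤ 1 / (2 * C) := fun i =>
    abs_sub_floor_mul_add_half_div_le hCpos (x i)
  calc dist x (gridRound d C x) ≤ √(Fintype.card (Fin d)) * (1 / (2 * C)) :=
        EuclideanSpace.dist_le_sqrt_card_mul (by positivity) hcoord
    _ = √d / (2 * C) := by rw [Fintype.card_fin]; ring

lemma EuclideanSpace.volume_setOf_forall_mem_Icc {ι : Type*} [Fintype ι] (a b : ι → ℝ) :
    volume {x : EuclideanSpace ℝ ι | ∀ i, x i ∈ Set.Icc (a i) (b i)} =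
      ∏ i, ENNReal.ofReal (b i - a i) := by
  have hpre : {x : EuclideanSpace ℝ ι | ∀ i, x i ∈ Set.Icc (a i) (b i)} =
      WithLp.ofLp ⁻¹' Set.Icc a b := by
    ext x
    simp [Pi.le_def, forall_and]
  rw [hpre, (PiLp.volume_preserving_ofLp ι).measure_preimage measurableSet_Icc.nullMeasurableSet,
    Real.volume_Icc_pi]

lemma EuclideanSpace.volume_unitCube (ι : Type*) [Fintype ι] :
    volume {x : EuclideanSpace ℝ ι | ∀ i, x i ∈ Set.Icc (0 : ℝ) 1} = 1 := by
  simpa using EuclideanSpace.volume_setOf_forall_mem_Icc (0 : ι → ℝ) 1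

lemma Real.pow_rpow_neg_one_div_natCast {x : ℝ} (hx : 0 ≤ x) {n : ℕ} (hn : n ≠ 0) :
    (x ^ n) ^ (-1 / n : ℝ) = x⁻¹ := by
  rw [neg_div, one_div, Real.rpow_neg (by positivity), Real.pow_rpow_inv_natCast hx hn]

/-- Global scaling law for the partitioned-manifold model: if `f` is `L`-Lipschitz
w.r.t. the Euclidean norm, then the average approximation error over the unit cube
satisfies `∫_{[0,1]^d} |f(x) − f(r(x))| dx ≤ (L·√d/2)·(C^d)^{−1/d}`. -/
theorem global_scaling_law (d : ℕ) (hd : 1 ≤ d) (L : ℝ) (hL : 0 ≤ L)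
    (f : EuclideanSpace ℝ (Fin d) → ℝ)
    (hf : ∀ x y : EuclideanSpace ℝ (Fin d), |f x - f y| ≤ L * dist x y)
    (C : ℕ) (hC : 0 < C) :
    ∫ x in {x : EuclideanSpace ℝ (Fin d) | ∀ i, x i ∈ Set.Icc (0 : ℝ) 1},
        |f x - f (gridRound d C x)| ≤
      (L * Real.sqrt d / 2) * (((C : ℝ) ^ d) ^ (-(1 : ℝ) / d)) := by
  have hvol := EuclideanSpace.volume_unitCube (Fin d)
  have hpointwise : ∀ x, ‖|f x - f (gridRound d C x)|‖ ≤ L * (√d / (2 * C)) := fun x => by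
    rw [Real.norm_eq_abs, abs_abs]
    exact (hf x _).trans (mul_le_mul_of_nonneg_left (dist_gridRound_le hC x) hL)
  calc ∫ x in _, |f x - f (gridRound d C x)|
      ≤ ‖∫ x in _, |f x - f (gridRound d C x)|‖ := le_abs_self _
    _ ≤ L * (√d / (2 * C)) * volume.real _ :=
        norm_setIntegral_le_of_norm_le_const (hvol ▸ ENNReal.one_lt_top) fun x _ => hpointwise x
    _ = (L * √d / 2) * (((C : ℝ) ^ d) ^ (-(1 : ℝ) / d)) := by
        rw [measureReal_def, hvol, Real.pow_rpow_neg_one_div_natCast (Nat.cast_nonneg C)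
          (Nat.one_le_iff_ne_zero.mp hd)]
        simp only [ENNReal.toReal_one]
        ring
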